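/- Let G be a finite group and P a p-subgroup of G. Then C_G(P) is almost of characteristic p if and only if N_G(P) is almost of characteristic p. -/

import Mathlib

/-!
As `P` is normal in `N_G(P)` with the same centralizer, one may assume `P ⊴ G`. Put
`D = O_{p'}(G)`. If `xD` centralizes `PD/D`, then `P` acts on the coset `xD` by conjugation and,
`|D|` being prime to `p`, fixes a point; hence `C_{G/D}(PD/D) = C_G(P)D/D`, which is
`C_G(P)/O_{p'}(C_G(P))`. It remains to see that for a normal `p`-subgroup `P` of `K`, `C_K(P)` is
of characteristic `p` iff `K` is. One way, `O_p(C_K(P)) = O_p(K) ∩ C_K(P)`. The other way, a normal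
subgroup `N` of `K` inherits characteristic `p`: if `y` is a `p'`-element centralizing
`O_p(N) = O_p(K) ∩ N`, then for `q ∈ O_p(K)` the commutator `f = q⁻¹ y q y⁻¹` lies in `O_p(N)`,
commutes with `y`, and `(q⁻¹ y q)^|y| = f^|y| = 1` forces `f = 1`.
-/

variable (p : ℕ) (G : Type*) [Group G]

/-- `O_p(G)`: the join of all normal `p`-subgroups of `G` (the largest normal `p`-subgroup
when `G` is finite). -/
def pCore : Subgroup G :=
  ⨆ H : {H : Subgroup G // H.Normal ∧ IsPGroup p H}, H.1

/-- `O_{p'}(G)`: the join of all normal subgroups of order coprime to `p` (the largest normal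
`p'`-subgroup when `G` is finite). -/
def pPrimeCore : Subgroup G :=
  ⨆ H : {H : Subgroup G // H.Normal ∧ Nat.Coprime (Nat.card H) p}, H.1

lemma iSup_normal {G : Type*} [Group G] {ι : Sort*} (H : ι → Subgroup G)
    (h : ∀ i, (H i).Normal) : (⨆ i, H i).Normal := by
  constructor
  intro n hn g
  refine Subgroup.iSup_induction (C := fun x => g * x * g⁻¹ ∈ ⨆ i, H i) H hn
    (fun i x hx => ?_) ?_ (fun x y hx hy => ?_)
  · exact Subgroup.mem_iSup_of_mem i ((h i).conj_mem x hx g)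
  · simpa using Subgroup.one_mem (⨆ i, H i)
  · have e : g * (x * y) * g⁻¹ = (g * x * g⁻¹) * (g * y * g⁻¹) := by group
    show g * (x * y) * g⁻¹ ∈ ⨆ i, H i
    rw [e]; exact mul_mem hx hy

instance pCore_normal : (pCore p G).Normal := iSup_normal _ (fun i => i.2.1)

instance pPrimeCore_normal : (pPrimeCore p G).Normal := iSup_normal _ (fun i => i.2.1)

/-- A group `G` is of characteristic `p` if `C_G(O_p(G)) ≤ O_p(G)`. -/
def IsCharP : Prop :=
  Subgroup.centralizer ((pCore p G : Subgroup G) : Set G) ≤ pCore p G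

/-- A group `G` is almost of characteristic `p` if `G/O_{p'}(G)` is of characteristic `p`. -/
def IsAlmostCharP : Prop := IsCharP p (G ⧸ pPrimeCore p G)

open Subgroup

section

variable {p G} {G' : Type*} [Group G']

lemma iSup_normal_induction [Finite G] {Q : Subgroup G → Prop} (hbot : Q ⊥)
    (hsup : ∀ A B : Subgroup G, B.Normal → Q A → Q B → Q (A ⊔ B)) :
    Q (⨆ H : {H : Subgroup G // H.Normal ∧ Q H}, H.1) := by
  have := Fintype.ofFinite {H : Subgroup G // H.Normal ∧ Q H}
  rw [← Finset.sup_univ_eq_iSup]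
  refine (Finset.sup_induction (p := fun H : Subgroup G => H.Normal ∧ Q H)
    ⟨inferInstance, hbot⟩ ?_ fun H _ => H.2).2
  rintro A ⟨hA, hQA⟩ B ⟨hB, hQB⟩
  exact ⟨sup_normal A B, hsup A B hB hQA hQB⟩

lemma coprime_card_sup_of_normal {A B : Subgroup G} [B.Normal] {n : ℕ}
    (hA : (Nat.card A).Coprime n) (hB : (Nat.card B).Coprime n) :
    (Nat.card ↥(A ⊔ B)).Coprime n := by
  rw [card_eq_card_quotient_mul_card_subgroup (B.subgroupOf (A ⊔ B)),
    Nat.card_congr (subgroupOfEquivOfLe le_sup_right).toEquiv,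
    ← Nat.card_congr (QuotientGroup.quotientInfEquivProdNormalQuotient A B).toEquiv]
  exact (Nat.Coprime.coprime_dvd_left (card_quotient_dvd_card _) hA).mul_left hB

lemma IsPGroup.eq_one_of_mem_of_coprime {Q : Subgroup G} (hQ : IsPGroup p Q) {g : G}
    (hg : g ∈ Q) (hcop : (orderOf g).Coprime p) : g = 1 := by
  obtain ⟨k, hk⟩ := hQ ⟨g, hg⟩
  have hdvd : orderOf g ∣ p ^ k := orderOf_mk g hg ▸ orderOf_dvd_of_pow_eq_one hk
  exact orderOf_eq_one_iff.mp ((hcop.pow_right k).eq_one_of_dvd hdvd)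

lemma exists_coprime_orderOf_pow_prime_pow [Finite G] (hp : p.Prime) (x : G) :
    ∃ a : ℕ, (orderOf (x ^ p ^ a)).Coprime p := by
  refine ⟨(orderOf x).factorization p, ?_⟩
  rw [orderOf_pow' x (pow_ne_zero _ hp.ne_zero), Nat.gcd_eq_right (Nat.ordProj_dvd _ _),
    Nat.coprime_comm]
  exact Nat.coprime_ordCompl hp (orderOf_pos x).ne'

lemma commute_of_commute_commutator {Q : Subgroup G} (hQ : IsPGroup p Q) {y q : G}
    (hy : (orderOf y).Coprime p) (hf : q⁻¹ * y * q * y⁻¹ ∈ Q)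
    (hcomm : Commute y (q⁻¹ * y * q * y⁻¹)) : Commute y q := by
  set f := q⁻¹ * y * q * y⁻¹
  have hconj : q⁻¹ * y * q = f * y := by simp [f]
  have hfm : f ^ orderOf y = 1 := by
    have := conj_pow (a := q⁻¹) (b := y) (i := orderOf y)
    rwa [inv_inv, hconj, pow_orderOf_eq_one, mul_one, inv_mul_cancel, hcomm.symm.mul_pow,
      pow_orderOf_eq_one, mul_one] at this
  have hf1 : f = 1 := hQ.eq_one_of_mem_of_coprime hf
    (Nat.Coprime.coprime_dvd_left (orderOf_dvd_of_pow_eq_one hfm) hy)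
  rwa [hf1, one_mul, mul_assoc, inv_mul_eq_iff_eq_mul] at hconj

lemma map_subtype_centralizer_subgroupOf {H K : Subgroup G} (hHK : H ≤ K)
    (hK : centralizer (H : Set G) ≤ K) :
    (centralizer (H.subgroupOf K : Set K)).map K.subtype = centralizer (H : Set G) := by
  ext x
  constructor
  · rintro ⟨y, hy, rfl⟩
    exact mem_centralizer_iff.mpr fun h hh =>
      congrArg Subtype.val (mem_centralizer_iff.mp hy ⟨h, hHK hh⟩ (mem_subgroupOf.mpr hh))
  · exact fun hx => ⟨⟨x, hK hx⟩, mem_centralizer_iff.mpr fun h hh =>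
      Subtype.ext (mem_centralizer_iff.mp hx _ hh), rfl⟩

section pCore

lemma le_pCore {K : Subgroup G} (hN : K.Normal) (hK : IsPGroup p K) : K ≤ pCore p G :=
  le_iSup (fun H : {H : Subgroup G // H.Normal ∧ IsPGroup p H} => H.1) ⟨K, hN, hK⟩

variable [Finite G]

lemma isPGroup_pCore : IsPGroup p (pCore p G) :=
  iSup_normal_induction (Q := fun H => IsPGroup p H) IsPGroup.of_bot
    fun _ _ _ hA hB => IsPGroup.to_sup_of_normal_right hA hB

lemma map_pCore_le {f : G →* G'} (hf : Function.Surjective f) :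
    (pCore p G).map f ≤ pCore p G' :=
  le_pCore ((pCore_normal p G).map f hf) (isPGroup_pCore.map f)

lemma map_pCore_eq (e : G ≃* G') : (pCore p G).map e.toMonoidHom = pCore p G' := by
  have : Finite G' := .of_equiv G e.toEquiv
  refine (map_pCore_le e.surjective).antisymm ?_
  rw [map_equiv_eq_comap_symm', ← map_le_iff_le_comap]
  exact map_pCore_le e.symm.surjective

instance pCore_characteristic : (pCore p G).Characteristic :=
  characteristic_iff_map_le.mpr fun e => map_pCore_le e.surjective

lemma pCore_subgroupOf_eq (N : Subgroup G) [N.Normal] :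
    (pCore p G).subgroupOf N = pCore p N :=
  (le_pCore normal_subgroupOf isPGroup_pCore.comap_subtype).antisymm <| map_le_iff_le_comap.mp <|
    le_pCore inferInstance (isPGroup_pCore.map _)

end pCore

section pPrimeCore

lemma le_pPrimeCore {K : Subgroup G} (hN : K.Normal) (hK : (Nat.card K).Coprime p) :
    K ≤ pPrimeCore p G :=
  le_iSup (fun H : {H : Subgroup G // H.Normal ∧ (Nat.card H).Coprime p} => H.1) ⟨K, hN, hK⟩

variable [Finite G]

lemma coprime_card_pPrimeCore : (Nat.card (pPrimeCore p G)).Coprime p :=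
  iSup_normal_induction (Q := fun H => (Nat.card H).Coprime p) (by simp)
    fun _ _ _ hA hB => coprime_card_sup_of_normal hA hB

lemma map_pPrimeCore_le {f : G →* G'} (hf : Function.Surjective f) :
    (pPrimeCore p G).map f ≤ pPrimeCore p G' :=
  le_pPrimeCore ((pPrimeCore_normal p G).map f hf)
    (Nat.Coprime.coprime_dvd_left (card_map_dvd _ f) coprime_card_pPrimeCore)

lemma map_pPrimeCore_eq (e : G ≃* G') : (pPrimeCore p G).map e.toMonoidHom = pPrimeCore p G' := by
  have : Finite G' := .of_equiv G e.toEquiv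
  refine (map_pPrimeCore_le e.surjective).antisymm ?_
  rw [map_equiv_eq_comap_symm', ← map_le_iff_le_comap]
  exact map_pPrimeCore_le e.symm.surjective

instance pPrimeCore_characteristic : (pPrimeCore p G).Characteristic :=
  characteristic_iff_map_le.mpr fun e => map_pPrimeCore_le e.surjective

lemma pPrimeCore_subgroupOf_eq (N : Subgroup G) [N.Normal] :
    (pPrimeCore p G).subgroupOf N = pPrimeCore p N :=
  (le_pPrimeCore normal_subgroupOf (Nat.Coprime.coprime_dvd_left
    (card_comap_dvd_of_injective _ _ N.subtype_injective) coprime_card_pPrimeCore)).antisymm <|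
    map_le_iff_le_comap.mp <| le_pPrimeCore inferInstance
      (Nat.Coprime.coprime_dvd_left (card_map_dvd _ _) coprime_card_pPrimeCore)

end pPrimeCore

section IsCharP

variable [Finite G]

lemma IsCharP.of_mulEquiv (e : G ≃* G') (h : IsCharP p G) : IsCharP p G' := by
  intro g hg
  rw [← map_pCore_eq e]
  refine ⟨e.symm g, h ?_, e.apply_symm_apply g⟩
  rw [mem_centralizer_iff] at hg ⊢
  intro q hq
  apply e.injective
  simpa using hg (e q) (map_pCore_eq e ▸ mem_map_of_mem _ hq)

lemma isCharP_congr (e : G ≃* G') : IsCharP p G ↔ IsCharP p G' :=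
  have : Finite G' := .of_equiv G e.toEquiv
  ⟨.of_mulEquiv e, .of_mulEquiv e.symm⟩

lemma isAlmostCharP_congr (e : G ≃* G') : IsAlmostCharP p G ↔ IsAlmostCharP p G' :=
  isCharP_congr (QuotientGroup.congr _ _ e (map_pPrimeCore_eq e))

lemma IsCharP.normal_subgroup [Fact p.Prime] (h : IsCharP p G) (N : Subgroup G) [N.Normal] :
    IsCharP p N := by
  suffices hX : IsPGroup p (centralizer ((pCore p N : Subgroup N) : Set N)) from
    le_pCore inferInstance hX
  intro x
  obtain ⟨a, ha⟩ := exists_coprime_orderOf_pow_prime_pow (p := p) Fact.out (x : G)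
  refine ⟨a, Subtype.ext (Subtype.ext ?_)⟩
  set y := (x : G) ^ p ^ a
  have hyN : y ∈ N := pow_mem (x : N).2 _
  have hy : y ∈ centralizer (pCore p G : Set G) := by
    refine mem_centralizer_iff.mpr fun q hq => ?_
    have hfQ : q⁻¹ * y * q * y⁻¹ ∈ pCore p G := by
      simpa only [mul_assoc] using mul_mem (inv_mem hq) ((pCore_normal p G).conj_mem q hq y)
    have hfN : q⁻¹ * y * q * y⁻¹ ∈ N := by
      simpa using mul_mem ((inferInstance : N.Normal).conj_mem y hyN q⁻¹) (inv_mem hyN)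
    have hf : (⟨_, hfN⟩ : N) ∈ pCore p N := by
      rw [← pCore_subgroupOf_eq]
      exact mem_subgroupOf.mpr hfQ
    have hxf : Commute (x : G) (q⁻¹ * y * q * y⁻¹) :=
      (congrArg Subtype.val (mem_centralizer_iff.mp x.2 _ hf)).symm
    exact (commute_of_commute_commutator isPGroup_pCore ha hfQ (hxf.pow_left _)).eq.symm
  simpa using isPGroup_pCore.eq_one_of_mem_of_coprime (h hy) ha

lemma IsCharP.of_centralizer {P : Subgroup G} [P.Normal] (hP : IsPGroup p P)
    (h : IsCharP p (centralizer (P : Set G))) : IsCharP p G := by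
  intro z hz
  have hzC : z ∈ centralizer (P : Set G) := centralizer_le (le_pCore inferInstance hP) hz
  suffices hz' : (⟨z, hzC⟩ : centralizer (P : Set G)) ∈ pCore p (centralizer (P : Set G)) by
    rwa [← pCore_subgroupOf_eq, mem_subgroupOf] at hz'
  refine h (mem_centralizer_iff.mpr fun q hq => Subtype.ext ?_)
  rw [← pCore_subgroupOf_eq, SetLike.mem_coe, mem_subgroupOf] at hq
  exact mem_centralizer_iff.mp hz _ hq

lemma isCharP_centralizer_iff [Fact p.Prime] {P : Subgroup G} [P.Normal] (hP : IsPGroup p P) :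
    IsCharP p (centralizer (P : Set G)) ↔ IsCharP p G :=
  ⟨.of_centralizer hP, fun h => h.normal_subgroup _⟩

end IsCharP

section Coprime

variable [Fact p.Prime] {P D : Subgroup G} [D.Normal]

lemma exists_mul_mem_centralizer_of_coprime (hP : IsPGroup p P) (hD : (Nat.card D).Coprime p)
    {x : G} (hx : ∀ u ∈ P, x⁻¹ * u * x * u⁻¹ ∈ D) : ∃ d ∈ D, x * d ∈ centralizer (P : Set G) := by
  -- `P` acts on `D` by `u • d = x⁻¹ u (x d) u⁻¹`, i.e. by conjugation on the coset `x D`.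
  let act (u : P) (d : D) : D := ⟨x⁻¹ * (u * (x * d) * (u : G)⁻¹), by
    convert mul_mem (hx u u.2) ((inferInstance : D.Normal).conj_mem d d.2 u) using 1
    group⟩
  let _ : MulAction P D :=
    { smul := act
      one_smul := fun d => Subtype.ext (show (act 1 d : G) = d by simp [act])
      mul_smul := fun u v d => Subtype.ext (show (act (u * v) d : G) = act u (act v d) by
        simp only [act, coe_mul]; group) }
  obtain ⟨d, hd⟩ := hP.nonempty_fixed_point_of_prime_not_dvd_card D
    (by rwa [← Nat.Prime.coprime_iff_not_dvd Fact.out, Nat.coprime_comm])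
  refine ⟨d, d.2, mem_centralizer_iff.mpr fun u hu => ?_⟩
  have hfix : x⁻¹ * (u * (x * d) * u⁻¹) = d := congrArg Subtype.val (hd ⟨u, hu⟩)
  rw [inv_mul_eq_iff_eq_mul, mul_inv_eq_iff_eq_mul] at hfix
  exact hfix

lemma centralizer_map_mk'_eq (hP : IsPGroup p P) (hD : (Nat.card D).Coprime p) :
    centralizer (P.map (QuotientGroup.mk' D) : Set (G ⧸ D)) =
      (centralizer (P : Set G)).map (QuotientGroup.mk' D) := by
  refine le_antisymm (fun xb hxb => ?_) (map_centralizer_le_centralizer_image _ _)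
  obtain ⟨x, rfl⟩ := QuotientGroup.mk'_surjective D xb
  have hx : ∀ u ∈ P, x⁻¹ * u * x * u⁻¹ ∈ D := by
    intro u hu
    have hux := mem_centralizer_iff.mp hxb _ (mem_map_of_mem _ hu)
    simp only [QuotientGroup.mk'_apply] at hux
    rw [← div_eq_mul_inv, ← QuotientGroup.eq_iff_div_mem, QuotientGroup.mk_mul,
      QuotientGroup.mk_mul, QuotientGroup.mk_inv, mul_assoc, hux, inv_mul_cancel_left]
  obtain ⟨d, hd, hxd⟩ := exists_mul_mem_centralizer_of_coprime hP hD hx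
  refine ⟨x * d, hxd, ?_⟩
  simpa using hd

end Coprime

lemma isAlmostCharP_centralizer_iff_of_normal [Finite G] [Fact p.Prime] {P : Subgroup G}
    [P.Normal] (hP : IsPGroup p P) :
    IsAlmostCharP p (centralizer (P : Set G)) ↔ IsAlmostCharP p G := by
  set C := centralizer (P : Set G)
  set π := QuotientGroup.mk' (pPrimeCore p G)
  have hker : (π.subgroupMap C).ker = pPrimeCore p C := by
    rw [ker_subgroupMap, QuotientGroup.ker_mk', pPrimeCore_subgroupOf_eq]
  have hC : C.map π = centralizer (P.map π : Set (G ⧸ pPrimeCore p G)) :=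
    (centralizer_map_mk'_eq hP coprime_card_pPrimeCore).symm
  let e : C ⧸ pPrimeCore p C ≃* centralizer (P.map π : Set (G ⧸ pPrimeCore p G)) :=
    (QuotientGroup.quotientMulEquivOfEq hker.symm).trans <|
      (QuotientGroup.quotientKerEquivOfSurjective _ (π.subgroupMap_surjective C)).trans <|
        MulEquiv.subgroupCongr hC
  rw [IsAlmostCharP, isCharP_congr e]
  exact isCharP_centralizer_iff (hP.map π)

end

/-- Let `G` be a finite group and `P` a `p`-subgroup of `G`. Then `C_G(P)` is almost of
characteristic `p` if and only if `N_G(P)` is almost of characteristic `p`. -/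
theorem isAlmostCharP_centralizer_iff_normalizer (p : ℕ) [Fact p.Prime]
    (G : Type*) [Group G] [Finite G] (P : Subgroup G) (hP : IsPGroup p P) :
    IsAlmostCharP p (Subgroup.centralizer (P : Set G)) ↔ IsAlmostCharP p (Subgroup.normalizer (P : Set G)) := by
  set N := normalizer (P : Set G)
  have hC : (centralizer (P.subgroupOf N : Set N)).map N.subtype = centralizer (P : Set G) :=
    map_subtype_centralizer_subgroupOf le_normalizer (centralizer_le_normalizer _)
  rw [← isAlmostCharP_centralizer_iff_of_normal (P := P.subgroupOf N) hP.comap_subtype]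
  exact isAlmostCharP_congr ((equivMapOfInjective _ _ N.subtype_injective).trans
    (MulEquiv.subgroupCongr hC)).symm
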